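/- If n = ∑_{k=0}^m ε_k 2^k with ε_k ∈ {0,1}, then v(n) + ∑_{p=0}^m v(⌊n/2^p⌋) = (2/3) ∑_{k=0}^m ε_k. -/
import Mathlib


open Finset

/-- The largest odd divisor of `k`. -/
def oddPart (k : ℕ) : ℕ := ordCompl[2] k

/-- `V n = ∑_{k=1}^n α(k)/k` as a rational number. -/
def V (n : ℕ) : ℚ := ∑ k ∈ Finset.Icc 1 n, (oddPart k : ℚ) / k

/-- `v n = V n - 2n/3`. -/
def v (n : ℕ) : ℚ := V n - 2 * n / 3

/-- `U n = ∑_{k=1}^n α(k)`. -/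
def U (n : ℕ) : ℕ := ∑ k ∈ Finset.Icc 1 n, oddPart k

/-- `G n = ∑_{k=1}^n (n+1-k)·α(k)/k` as a rational number. -/
def G (n : ℕ) : ℚ := ∑ k ∈ Finset.Icc 1 n, ((n : ℚ) + 1 - k) * (oddPart k : ℚ) / k

/-- `g n = n(n+2)/3 - G n`. -/
def g (n : ℕ) : ℚ := n * (n + 2) / 3 - G n

lemma oddPart_of_odd {k : ℕ} (h : ¬ 2 ∣ k) : oddPart k = k := by
  unfold oddPart
  rw [Nat.factorization_eq_zero_of_not_dvd h]
  simp

lemma oddPart_two_mul (k : ℕ) : oddPart (2 * k) = oddPart k := by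
  rcases Nat.eq_zero_or_pos k with rfl | hk
  · simp [oddPart]
  · unfold oddPart
    rw [Nat.ordCompl_mul]
    have h2 : ordCompl[2] 2 = 1 := by
      rw [Nat.Prime.factorization_self Nat.prime_two]; simp
    rw [h2, one_mul]

lemma V_succ (n : ℕ) : V (n + 1) = V n + (oddPart (n + 1) : ℚ) / (n + 1) := by
  unfold V
  rw [Finset.sum_Icc_succ_top (by omega : 1 ≤ n + 1)]
  push_cast
  ring_nf

lemma V_two_mul (q : ℕ) : V (2 * q) = q + V q / 2 := by
  induction q with
  | zero => simp [V]
  | succ q ih =>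
    have h1 : 2 * (q + 1) = (2 * q + 1) + 1 := by ring
    have h2 : oddPart (2 * q + 1) = 2 * q + 1 := oddPart_of_odd (by omega)
    have h3 : oddPart (2 * q + 2) = oddPart (q + 1) := by
      have : 2 * q + 2 = 2 * (q + 1) := by ring
      rw [this, oddPart_two_mul]
    have hne : (2 * q + 1 : ℚ) ≠ 0 := by positivity
    have hne2 : (2 * q + 2 : ℚ) ≠ 0 := by positivity
    have hne3 : (q + 1 : ℚ) ≠ 0 := by positivity
    rw [h1, V_succ, V_succ, h2, V_succ, ih]
    push_cast [h3]
    field_simp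
    ring

lemma v_rec (q r : ℕ) (hr : r ≤ 1) : v (2 * q + r) = v q / 2 + r / 3 := by
  interval_cases r
  · simp [v, V_two_mul]; ring
  · have : V (2 * q + 1) = V (2 * q) + 1 := by
      rw [V_succ, oddPart_of_odd (k := 2 * q + 1) (by omega)]
      have hne : ((2 * q : ℕ) + 1 : ℚ) ≠ 0 := by positivity
      push_cast
      field_simp
    simp [v, this, V_two_mul]
    push_cast
    ring

lemma key : ∀ m : ℕ, ∀ ε : ℕ → ℕ, (∀ k, ε k ≤ 1) → ∀ n : ℕ,
    n = ∑ k ∈ Finset.range (m + 1), ε k * 2 ^ k →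
    v n + ∑ p ∈ Finset.range (m + 1), v (n / 2 ^ p)
      = (2 / 3) * ∑ k ∈ Finset.range (m + 1), (ε k : ℚ) := by
  intro m
  induction m with
  | zero =>
    intro ε hε n hn
    simp at hn ⊢
    have := hε 0
    interval_cases h : ε 0 <;> simp [hn, h, v, V] <;> norm_num [show Finset.Icc 1 1 = {1} from rfl, oddPart]
  | succ m ih =>
    intro ε hε n hn
    set q := ∑ k ∈ Finset.range (m + 1), ε (k + 1) * 2 ^ k with hq
    have hn2 : n = 2 * q + ε 0 := by
      rw [hn, Finset.sum_range_succ']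
      simp only [pow_zero, mul_one]
      rw [hq, Finset.mul_sum]
      congr 1
      apply Finset.sum_congr rfl
      intro k _
      ring
    have hε0 := hε 0
    have hdiv : n / 2 = q := by omega
    have hmod : n % 2 = ε 0 := by omega
    have hIH := ih (fun k => ε (k + 1)) (fun k => hε (k + 1)) q rfl
    have hsum : ∑ p ∈ Finset.range (m + 2), v (n / 2 ^ p)
        = v n + ∑ p ∈ Finset.range (m + 1), v (q / 2 ^ p) := by
      rw [Finset.sum_range_succ']
      simp only [pow_zero, Nat.div_one]
      rw [add_comm]
      congr 1
      apply Finset.sum_congr rfl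
      intro p _
      congr 1
      rw [pow_succ', ← Nat.div_div_eq_div_mul, hdiv]
    have hvn : v n = v q / 2 + (ε 0 : ℚ) / 3 := by
      rw [hn2]; exact v_rec q (ε 0) hε0
    rw [hsum, Finset.sum_range_succ' (fun k => (ε k : ℚ)), hvn]
    have : ∑ p ∈ Finset.range (m + 1), v (q / 2 ^ p)
        = (2 / 3) * ∑ k ∈ Finset.range (m + 1), ((ε (k + 1) : ℚ)) - v q := by
      linarith [hIH]
    rw [this]
    ring

theorem stmt4 (m : ℕ) (ε : ℕ → ℕ) (hε : ∀ k, ε k ≤ 1) (n : ℕ)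
    (hn : n = ∑ k ∈ Finset.range (m + 1), ε k * 2 ^ k) :
    v n + ∑ p ∈ Finset.range (m + 1), v (n / 2 ^ p)
      = (2 / 3) * ∑ k ∈ Finset.range (m + 1), (ε k : ℚ) :=
  key m ε hε n hn
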